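/- arXiv:0904.3826 — 2 statements merged into one kernel-verified Lean document; each statement's English description precedes it below -/
import Mathlib

section
/- Let R₀ be the type-0 Rauzy map on permutations of {1,...,d}: R₀(π)(j) = π(j) if π(j) ≤ π(d), R₀(π)(j) = π(j)+1 if π(d) < π(j) < d, R₀(π)(j) = π(d)+1 if π(j) = d. Then R₀ restricts to a bijection of the set of irreducible permutations of {1,...,d} onto itself. The same holds for the type-1 Rauzy map R₁(π) = (R₀(π^{-1}))^{-1}. -/
/-- Irreducibility of a permutation of `{1, ..., d}`. -/
def IrredP {d : ℕ} (π : Equiv.Perm (Fin d)) : Prop :=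
  ∀ k : ℕ, 1 ≤ k → k < d →
    (⇑π '' {i : Fin d | (i : ℕ) < k}) ≠ {i : Fin d | (i : ℕ) < k}

/-- `σ` is the image of `π` by the type-0 Rauzy map. -/
def IsR0 {d : ℕ} (π σ : Equiv.Perm (Fin d)) : Prop :=
  ∀ l j : Fin d, (l : ℕ) = d - 1 →
    (σ j : ℕ) = if (π j : ℕ) ≤ (π l : ℕ) then (π j : ℕ)
      else if (π j : ℕ) < d - 1 then (π j : ℕ) + 1 else (π l : ℕ) + 1

/-!
With `m = π(d)`, the Rauzy map is `σ = ρ ∘ π` where `ρ` fixes the values `≤ m` and cyclically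
shifts the values above `m`. Since `σ(d) = π(d)`, the value `m` and hence `ρ` can be read off
`σ`, so the map is injective; being an injective self-map of a finite set, it is onto once it
preserves irreducibility. If `σ` mapped `{1, ..., k}` onto itself, then either `m ≤ k`, and
`σ(d) = m` forces `d ≤ k`, or `m > k`, and `π` agrees with `σ` on `{1, ..., k}`, so `π` would too.
The type-1 map is the type-0 map conjugated by inversion, which preserves irreducibility.
-/

theorem IrredP.inv {d : ℕ} {π : Equiv.Perm (Fin d)} (h : IrredP π) : IrredP π⁻¹ := by
  intro k hk hkd hinv
  apply h k hk hkd
  conv_lhs => rw [← hinv]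
  exact π.image_symm_image _

theorem irredP_inv_iff {d : ℕ} {π : Equiv.Perm (Fin d)} : IrredP π⁻¹ ↔ IrredP π :=
  ⟨fun h => inv_inv π ▸ h.inv, IrredP.inv⟩

namespace IsR0

variable {d : ℕ} {π π' σ : Equiv.Perm (Fin d)}

theorem apply_last (h : IsR0 π σ) {l : Fin d} (hl : (l : ℕ) = d - 1) : σ l = π l :=
  Fin.ext <| by simpa using h l l hl

theorem apply_eq_of_le (h : IsR0 π σ) {l j : Fin d} (hl : (l : ℕ) = d - 1)
    (hj : (σ j : ℕ) ≤ π l) : σ j = π j := by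
  have e := h l j hl
  exact Fin.ext (by split_ifs at e <;> omega)

theorem left_unique (h : IsR0 π σ) (h' : IsR0 π' σ) : π = π' := by
  refine Equiv.ext fun j => Fin.ext ?_
  let l : Fin d := ⟨d - 1, by have := j.is_lt; omega⟩
  have hl : (π l : ℕ) = π' l := by rw [← h.apply_last rfl, h'.apply_last rfl]
  have e := h l j rfl
  have e' := h' l j rfl
  have := (π j).is_lt
  have := (π' j).is_lt
  split_ifs at e e' <;> omega

theorem irredP (h : IsR0 π σ) (hπ : IrredP π) : IrredP σ := by
  intro k hk hkd hσ
  let l : Fin d := ⟨d - 1, by omega⟩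
  by_cases hm : (π l : ℕ) < k
  · have hlk : σ l ∈ ⇑σ '' {i : Fin d | (i : ℕ) < k} := by
      rw [hσ, Set.mem_ofPred_eq, h.apply_last rfl]
      exact hm
    obtain ⟨i, hi, hil⟩ := hlk
    have hik : (i : ℕ) < k := hi
    rw [σ.injective hil] at hik
    change d - 1 < k at hik
    omega
  · apply hπ k hk hkd
    refine (Set.image_congr fun i hi => (h.apply_eq_of_le (l := l) rfl ?_).symm).trans hσ
    have : σ i ∈ {i : Fin d | (i : ℕ) < k} := hσ ▸ Set.mem_image_of_mem σ hi
    rw [Set.mem_ofPred_eq] at this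
    omega

end IsR0

theorem stmt9 (d : ℕ) (R0 R1 : Equiv.Perm (Fin d) → Equiv.Perm (Fin d))
    (hR0 : ∀ π, IrredP π → IsR0 π (R0 π))
    (hR1 : ∀ π, IrredP π → R1 π = (R0 π⁻¹)⁻¹) :
    Set.BijOn R0 {π | IrredP π} {π | IrredP π} ∧
    Set.BijOn R1 {π | IrredP π} {π | IrredP π} := by
  have hmaps : Set.MapsTo R0 {π | IrredP π} {π | IrredP π} := fun π hπ => (hR0 π hπ).irredP hπ
  have hinj : Set.InjOn R0 {π | IrredP π} := fun π hπ π' hπ' hEq =>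
    (hR0 π hπ).left_unique (hEq ▸ hR0 π' hπ')
  have hbij0 := ((Set.toFinite _).injOn_iff_bijOn_of_mapsTo hmaps).mp hinj
  have hinv : Set.BijOn (·⁻¹) {π : Equiv.Perm (Fin d) | IrredP π} {π | IrredP π} :=
    (Equiv.inv _).bijOn fun _ => irredP_inv_iff
  exact ⟨hbij0, (hinv.comp (hbij0.comp hinv)).congr fun π hπ => (hR1 π hπ).symm⟩
end

section
/- Let π be an irreducible permutation of {1,...,d} and ζ ∈ ℂ^d a suspension datum over π (Re ζ_j > 0 for all j; Im(ζ_1 + ... + ζ_i) > 0 and Im(ζ_{π^{-1}(1)} + ... + ζ_{π^{-1}(i)}) < 0 for all 1 ≤ i ≤ d-1). Suppose Re(ζ_d) > Re(ζ_{π^{-1}(d)}) (type 0). Define ζ' by ζ'_j = ζ_j for j ≠ d and ζ'_d = ζ_d - ζ_{π^{-1}(d)}. Then ζ' is a suspension datum over R₀(π), where R₀(π)(j) = π(j) if π(j) ≤ π(d), π(j)+1 if π(d) < π(j) < d, and π(d)+1 if π(j) = d. -/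
/-- `ζ` is a suspension datum over the permutation `π`. -/
def Susp {d : ℕ} (π : Equiv.Perm (Fin d)) (ζ : Fin d → ℂ) : Prop :=
  (∀ j, 0 < (ζ j).re) ∧
  (∀ i : ℕ, 1 ≤ i → i < d →
    0 < (∑ j ∈ Finset.univ.filter (fun j : Fin d => (j : ℕ) < i), ζ j).im) ∧
  (∀ i : ℕ, 1 ≤ i → i < d →
    (∑ j ∈ Finset.univ.filter (fun j : Fin d => (j : ℕ) < i), ζ (π.symm j)).im < 0)

/-!
The bottom row of `R₀(π)` is that of `π` with its last letter `a = π⁻¹(d)` moved to the slot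
right after the letter `d`. Once `a` has been passed, `ζ_a` cancels against the `-ζ_a` in `ζ'_d`,
so every proper bottom partial sum of `ζ'` over `R₀(π)` is one of `ζ` over `π`, except the one
ending at `d`, which is `B + (ζ_d - ζ_a)` with `B` an earlier bottom partial sum of `ζ` (or `0`).
Comparing the two ways of summing all of `ζ`, `ζ_d - ζ_a` is the difference of the proper bottom
and top partial sums of length `d - 1`, so its imaginary part is negative.
-/

open Finset

variable {d : ℕ}

/-- The letters occupying the first `i` slots of the bottom row of `τ`. -/
def bottomPrefix (τ : Equiv.Perm (Fin d)) (i : ℕ) : Finset (Fin d) :=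
  univ.filter fun j : Fin d => (τ j : ℕ) < i

@[simp]
lemma mem_bottomPrefix {τ : Equiv.Perm (Fin d)} {i : ℕ} {j : Fin d} :
    j ∈ bottomPrefix τ i ↔ (τ j : ℕ) < i := by
  simp [bottomPrefix]

lemma sum_filter_val_lt_symm {M : Type*} [AddCommMonoid M] (τ : Equiv.Perm (Fin d))
    (f : Fin d → M) (i : ℕ) :
    ∑ p ∈ univ.filter (fun p : Fin d => (p : ℕ) < i), f (τ.symm p)
      = ∑ j ∈ bottomPrefix τ i, f j :=
  sum_nbij' τ.symm τ (by simp) (by simp) (by simp) (by simp)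
    (fun _ _ => rfl)

lemma sum_filter_val_lt_add_of_val_eq {M : Type*} [AddCommMonoid M] {l : Fin d}
    (hl : (l : ℕ) = d - 1) (f : Fin d → M) :
    ∑ j ∈ univ.filter (fun j : Fin d => (j : ℕ) < d - 1), f j + f l = ∑ j, f j := by
  have herase : univ.filter (fun j : Fin d => (j : ℕ) < d - 1) = univ.erase l := by
    ext j
    simp only [mem_filter, mem_univ, true_and, mem_erase, and_true, ne_eq, Fin.ext_iff, hl]
    omega
  rw [herase, sum_erase_add _ _ (mem_univ l)]

lemma insert_bottomPrefix_apply (τ : Equiv.Perm (Fin d)) (j : Fin d) :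
    insert j (bottomPrefix τ (τ j)) = bottomPrefix τ (τ j + 1) := by
  ext k
  simp only [mem_insert, mem_bottomPrefix]
  constructor
  · rintro (rfl | hk) <;> omega
  · intro hk
    rcases Nat.lt_succ_iff_lt_or_eq.mp hk with hk | hk
    · exact Or.inr hk
    · exact Or.inl (τ.injective (Fin.ext hk))

namespace IsR0

variable {π σ : Equiv.Perm (Fin d)} {l : Fin d}

lemma bottomPrefix_eq_of_le (hσ : IsR0 π σ) (hl : (l : ℕ) = d - 1) {i : ℕ}
    (hi : i ≤ π l + 1) : bottomPrefix σ i = bottomPrefix π i := by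
  ext j
  have hσj := hσ l j hl
  have := (π j).isLt
  simp only [mem_bottomPrefix]
  split_ifs at hσj <;> omega

lemma bottomPrefix_eq_insert (hσ : IsR0 π σ) (hl : (l : ℕ) = d - 1) {i : ℕ}
    (hi : π l + 2 ≤ i) : bottomPrefix σ i = insert (π.symm l) (bottomPrefix π (i - 1)) := by
  ext j
  have hσj := hσ l j hl
  have := (π j).isLt
  simp only [mem_bottomPrefix, mem_insert, Equiv.eq_symm_apply, Fin.ext_iff, hl]
  split_ifs at hσj <;> omega

end IsR0

namespace Susp

variable {π : Equiv.Perm (Fin d)} {ζ : Fin d → ℂ}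

lemma im_sum_bottomPrefix_neg (hζ : Susp π ζ) {i : ℕ} (hi : 1 ≤ i) (hid : i < d) :
    (∑ j ∈ bottomPrefix π i, ζ j).im < 0 := by
  rw [← sum_filter_val_lt_symm]
  exact hζ.2.2 i hi hid

lemma im_sum_bottomPrefix_nonpos (hζ : Susp π ζ) {i : ℕ} (hid : i < d) :
    (∑ j ∈ bottomPrefix π i, ζ j).im ≤ 0 := by
  rcases Nat.eq_zero_or_pos i with rfl | hi
  · simp [bottomPrefix]
  · exact (hζ.im_sum_bottomPrefix_neg hi hid).le

lemma im_sub_symm_neg (hζ : Susp π ζ) {l : Fin d} (hl : (l : ℕ) = d - 1) (hd : 2 ≤ d) :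
    (ζ l - ζ (π.symm l)).im < 0 := by
  have htop := hζ.2.1 (d - 1) (by omega) (by omega)
  have hbot := hζ.2.2 (d - 1) (by omega) (by omega)
  have htotal : ∑ j, ζ (π.symm j) = ∑ j, ζ j := π.symm.sum_comp ζ
  rw [← sum_filter_val_lt_add_of_val_eq hl, ← sum_filter_val_lt_add_of_val_eq hl] at htotal
  have hdiff := congrArg Complex.im htotal
  simp only [Complex.add_im] at hdiff
  rw [Complex.sub_im]
  linarith

lemma im_sum_bottomPrefix_rauzy0_neg (hζ : Susp π ζ) {σ : Equiv.Perm (Fin d)} (hσ : IsR0 π σ)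
    {l : Fin d} (hl : (l : ℕ) = d - 1) {i : ℕ} (hi : 1 ≤ i) (hid : i < d) :
    (∑ j ∈ bottomPrefix σ i, (ζ - Pi.single l (ζ (π.symm l)) : Fin d → ℂ) j).im < 0 := by
  simp only [Pi.sub_apply, sum_sub_distrib, sum_pi_single']
  rcases lt_trichotomy i (π l + 1) with hlt | rfl | hgt
  · have hl_notMem : l ∉ bottomPrefix π i := by
      rw [mem_bottomPrefix]; omega
    rw [hσ.bottomPrefix_eq_of_le hl hlt.le, if_neg hl_notMem, sub_zero]
    exact hζ.im_sum_bottomPrefix_neg hi hid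
  · have hl_notMem : l ∉ bottomPrefix π (π l) := by simp
    rw [hσ.bottomPrefix_eq_of_le hl le_rfl, ← insert_bottomPrefix_apply,
      if_pos (mem_insert_self _ _), sum_insert hl_notMem, add_comm, add_sub_assoc, Complex.add_im]
    linarith [hζ.im_sum_bottomPrefix_nonpos (i := π l) (by omega),
      hζ.im_sub_symm_neg hl (by omega)]
  · have ha_notMem : π.symm l ∉ bottomPrefix π (i - 1) := by
      rw [mem_bottomPrefix, π.apply_symm_apply]; omega
    have hl_mem : l ∈ insert (π.symm l) (bottomPrefix π (i - 1)) :=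
      mem_insert_of_mem (mem_bottomPrefix.mpr (by omega))
    rw [hσ.bottomPrefix_eq_insert hl hgt, if_pos hl_mem, sum_insert ha_notMem, add_sub_cancel_left]
    exact hζ.im_sum_bottomPrefix_neg (by omega) (by omega)

end Susp

theorem stmt12_general (d : ℕ) (π : Equiv.Perm (Fin d))
    (ζ ζ' : Fin d → ℂ) (hζ : Susp π ζ)
    (htype0 : ∀ l : Fin d, (l : ℕ) = d - 1 → (ζ (π.symm l)).re < (ζ l).re)
    (hζ'1 : ∀ j : Fin d, (j : ℕ) ≠ d - 1 → ζ' j = ζ j)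
    (hζ'2 : ∀ l : Fin d, (l : ℕ) = d - 1 → ζ' l = ζ l - ζ (π.symm l))
    (σ : Equiv.Perm (Fin d)) (hσ : IsR0 π σ) :
    Susp σ ζ' := by
  refine ⟨fun j => ?_, fun i hi hid => ?_, fun i hi hid => ?_⟩
  · by_cases hj : (j : ℕ) = d - 1
    · rw [hζ'2 j hj, Complex.sub_re, sub_pos]
      exact htype0 j hj
    · rw [hζ'1 j hj]
      exact hζ.1 j
  · rw [sum_congr rfl fun j hj => hζ'1 j (by simp only [mem_filter] at hj; omega)]
    exact hζ.2.1 i hi hid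
  · set l : Fin d := ⟨d - 1, by omega⟩
    have hl : (l : ℕ) = d - 1 := rfl
    have hζ' : ζ' = ζ - Pi.single l (ζ (π.symm l)) := by
      funext j
      by_cases hj : j = l
      · simp [hj, hζ'2 l hl]
      · simp [hζ'1 j (fun h => hj (Fin.ext h)), hj]
    rw [hζ', sum_filter_val_lt_symm]
    exact hζ.im_sum_bottomPrefix_rauzy0_neg hσ hl hi hid

theorem stmt12 (d : ℕ) (π : Equiv.Perm (Fin d)) (hirr : IrredP π)
    (ζ ζ' : Fin d → ℂ) (hζ : Susp π ζ)
    (htype0 : ∀ l : Fin d, (l : ℕ) = d - 1 → (ζ (π.symm l)).re < (ζ l).re)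
    (hζ'1 : ∀ j : Fin d, (j : ℕ) ≠ d - 1 → ζ' j = ζ j)
    (hζ'2 : ∀ l : Fin d, (l : ℕ) = d - 1 → ζ' l = ζ l - ζ (π.symm l))
    (σ : Equiv.Perm (Fin d)) (hσ : IsR0 π σ) :
    Susp σ ζ' :=
  stmt12_general d π ζ ζ' hζ htype0 hζ'1 hζ'2 σ hσ
end
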